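/- arXiv:1101.3454 — 7 statements merged into one kernel-verified Lean document; each statement's English description precedes it below -/
import Mathlib

section
/- Let f : ℝ → ℝ be continuous, c ∈ ℝ, and let Φ : ℝ → ℝ be a C² solution of Φ'' + c·Φ' + f(Φ) = 0 on ℝ with Φ(-∞) = 0, Φ(+∞) = 1, Φ'(±∞) = 0, and Φ' ∈ L²(ℝ). Then c · ∫_ℝ (Φ'(ξ))² dξ = F(1), where F(u) = -∫₀^u f(s) ds. In particular, if ∫_ℝ (Φ')² dξ > 0, then c = F(1) / ∫_ℝ (Φ')² dξ. -/
open MeasureTheory Filter Topology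

/-!
Along a solution of `Φ'' + c Φ' + f(Φ) = 0` the energy `E = (Φ')²/2 - F(Φ)` satisfies
`E' = Φ' (Φ'' + f(Φ)) = -c (Φ')²`. Integrating over `ℝ`, the boundary values
`E(-∞) = -F(0) = 0` and `E(+∞) = -F(1)` give `-c ∫ (Φ')² = -F(1)`.
-/

/-- In the paper's notation `F u = -∫₀ᵘ f`, this is `v²/2 - F u`. -/
noncomputable def waveEnergy (f : ℝ → ℝ) (u v : ℝ) : ℝ :=
  v ^ 2 / 2 + ∫ s in (0:ℝ)..u, f s

variable {f : ℝ → ℝ}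

theorem continuous_waveEnergy (hf : Continuous f) :
    Continuous (fun p : ℝ × ℝ => waveEnergy f p.1 p.2) :=
  ((continuous_snd.pow 2).div_const 2).add
    ((intervalIntegral.continuous_primitive (fun _ _ => hf.intervalIntegrable _ _) 0).comp
      continuous_fst)

theorem hasDerivAt_waveEnergy_comp (hf : Continuous f) {Φ Φ' : ℝ → ℝ} {x Φ'' : ℝ}
    (hΦ : HasDerivAt Φ (Φ' x) x) (hΦ' : HasDerivAt Φ' Φ'' x) :
    HasDerivAt (fun x => waveEnergy f (Φ x) (Φ' x)) (Φ' x * (Φ'' + f (Φ x))) x := by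
  have hkin : HasDerivAt (fun x => Φ' x ^ 2 / 2) (Φ' x * Φ'') x := by
    refine ((hΦ'.pow 2).div_const 2).congr_deriv ?_
    ring
  have hpot : HasDerivAt (fun x => ∫ s in (0:ℝ)..Φ x, f s) (f (Φ x) * Φ' x) x :=
    (hf.integral_hasStrictDerivAt 0 (Φ x)).hasDerivAt.comp x hΦ
  refine (hkin.add hpot).congr_deriv ?_
  ring

theorem tendsto_waveEnergy_comp {α : Type*} {l : Filter α} (hf : Continuous f)
    {Φ Φ' : α → ℝ} {a : ℝ} (hΦ : Tendsto Φ l (𝓝 a)) (hΦ' : Tendsto Φ' l (𝓝 0)) :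
    Tendsto (fun x => waveEnergy f (Φ x) (Φ' x)) l (𝓝 (∫ s in (0:ℝ)..a, f s)) := by
  have h := ((continuous_waveEnergy hf).tendsto (a, 0)).comp (hΦ.prodMk_nhds hΦ')
  simpa [waveEnergy, Function.comp_def] using h

/-- Multiplying the travelling-wave ODE by `Φ'` and integrating over `ℝ`
yields `c ∫ (Φ')² = F(1)` with `F(u) = -∫₀ᵘ f`. -/
theorem stmt_0 (f : ℝ → ℝ) (hf : Continuous f) (c : ℝ) (Φ : ℝ → ℝ)
    (hΦ : ContDiff ℝ 2 Φ)
    (hode : ∀ x : ℝ, deriv (deriv Φ) x + c * deriv Φ x + f (Φ x) = 0)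
    (hlim0 : Tendsto Φ atBot (nhds 0))
    (hlim1 : Tendsto Φ atTop (nhds 1))
    (hdlim0 : Tendsto (deriv Φ) atBot (nhds 0))
    (hdlim1 : Tendsto (deriv Φ) atTop (nhds 0))
    (hL2 : Integrable (fun x => (deriv Φ x) ^ 2)) :
    c * (∫ x : ℝ, (deriv Φ x) ^ 2) = -(∫ s in (0:ℝ)..1, f s) ∧
      (0 < ∫ x : ℝ, (deriv Φ x) ^ 2 →
        c = (-(∫ s in (0:ℝ)..1, f s)) / ∫ x : ℝ, (deriv Φ x) ^ 2) := by
  have henergy : ∀ x, HasDerivAt (fun x => waveEnergy f (Φ x) (deriv Φ x))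
      (-c * deriv Φ x ^ 2) x := fun x => by
    refine (hasDerivAt_waveEnergy_comp hf (hΦ.differentiable two_ne_zero x).hasDerivAt
      (hΦ.differentiable_deriv_two x).hasDerivAt).congr_deriv ?_
    linear_combination deriv Φ x * hode x
  have hFTC := integral_of_hasDerivAt_of_tendsto henergy (hL2.const_mul (-c))
    (tendsto_waveEnergy_comp hf hlim0 hdlim0) (tendsto_waveEnergy_comp hf hlim1 hdlim1)
  rw [integral_const_mul, intervalIntegral.integral_same, sub_zero] at hFTC
  have hmain : c * (∫ x : ℝ, (deriv Φ x) ^ 2) = -(∫ s in (0:ℝ)..1, f s) := by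
    linarith
  exact ⟨hmain, fun hpos => eq_div_of_mul_eq hpos.ne' hmain⟩
end

section
/- Let f ∈ C¹ with f(0) = f(1) = 0, c ∈ ℝ, and let Φ : ℝ → ℝ be a C² solution of Φ'' + c Φ' + f(Φ) = 0 with 0 ≤ Φ ≤ 1, Φ' ∈ L²(ℝ), and Φ'(±∞) = 0. Then Φ'' ∈ L²(ℝ), and moreover ∫_ℝ (Φ'')² dξ = ∫_ℝ f'(Φ)·(Φ')² dξ. -/
/-!
Along a solution, `(Φ'')² = f'(Φ) (Φ')² - G'` with the flux `G = (c/2) (Φ')² + f(Φ) Φ'`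
(multiply the equation by `Φ''`). Since `Φ' → 0` and `f(Φ)` stays bounded, `G → 0` at `±∞`, so
integrating over `[-t, t]` and letting `t → ∞` gives the identity; as `(Φ'')² ≥ 0`, convergence of
its integrals over `[-t, t]` already makes it integrable.
-/

open MeasureTheory Filter Set Topology

theorem integrable_and_integral_eq_of_nonneg_of_intervalIntegral_tendsto {g : ℝ → ℝ}
    (hg : LocallyIntegrable g) (hg₀ : ∀ x, 0 ≤ g x) {I : ℝ}
    (hI : Tendsto (fun t => ∫ x in -t..t, g x) atTop (𝓝 I)) :
    Integrable g ∧ ∫ x, g x = I := by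
  have hInt : Integrable g := by
    refine integrable_of_intervalIntegral_norm_tendsto I
      (fun t => (hg.integrableOn_isCompact isCompact_Icc).mono_set Ioc_subset_Icc_self)
      tendsto_neg_atTop_atBot tendsto_id ?_
    simpa only [Real.norm_of_nonneg (hg₀ _), id] using hI
  exact ⟨hInt, tendsto_nhds_unique
    (intervalIntegral_tendsto_integral hInt tendsto_neg_atTop_atBot tendsto_id) hI⟩

theorem integrable_and_integral_eq_of_hasDerivAt_sub {g h G : ℝ → ℝ} {m n : ℝ}
    (hg : LocallyIntegrable g) (hg₀ : ∀ x, 0 ≤ g x) (hh : Integrable h)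
    (hG : ∀ x, HasDerivAt G (h x - g x) x)
    (hbot : Tendsto G atBot (𝓝 m)) (htop : Tendsto G atTop (𝓝 n)) :
    Integrable g ∧ ∫ x, g x = (∫ x, h x) - (n - m) := by
  refine integrable_and_integral_eq_of_nonneg_of_intervalIntegral_tendsto hg hg₀ ?_
  have hinterval : ∀ a b : ℝ, ∫ x in a..b, g x = (∫ x in a..b, h x) - (G b - G a) := by
    intro a b
    have hgi : IntervalIntegrable g volume a b :=
      (hg.integrableOn_isCompact isCompact_uIcc).intervalIntegrable
    rw [← intervalIntegral.integral_eq_sub_of_hasDerivAt (fun x _ => hG x)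
      (hh.intervalIntegrable.sub hgi), intervalIntegral.integral_sub hh.intervalIntegrable hgi]
    ring
  simp only [hinterval]
  exact (intervalIntegral_tendsto_integral hh tendsto_neg_atTop_atBot tendsto_id).sub
    (htop.sub (hbot.comp tendsto_neg_atTop_atBot))

theorem hasDerivAt_travellingWave_flux {f Φ : ℝ → ℝ} {c x : ℝ}
    (hf : DifferentiableAt ℝ f (Φ x)) (hΦ : DifferentiableAt ℝ Φ x)
    (hΦ' : DifferentiableAt ℝ (deriv Φ) x)
    (hode : deriv (deriv Φ) x + c * deriv Φ x + f (Φ x) = 0) :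
    HasDerivAt (fun y => c / 2 * deriv Φ y ^ 2 + f (Φ y) * deriv Φ y)
      (deriv f (Φ x) * deriv Φ x ^ 2 - deriv (deriv Φ) x ^ 2) x := by
  have hΦ'' : deriv (deriv Φ) x = -(c * deriv Φ x + f (Φ x)) := by linarith
  refine (((hΦ'.hasDerivAt.pow 2).const_mul (c / 2)).add
    ((hf.hasDerivAt.comp x hΦ.hasDerivAt).mul hΦ'.hasDerivAt)).congr_deriv ?_
  rw [Function.comp_apply, hΦ'']
  push_cast
  ring

theorem exists_bound_comp_of_forall_mem_isCompact {α : Type*} {g : ℝ → ℝ} {Φ : α → ℝ}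
    {s : Set ℝ} (hs : IsCompact s) (hg : ContinuousOn g s) (hΦ : ∀ x, Φ x ∈ s) :
    ∃ C, ∀ x, ‖g (Φ x)‖ ≤ C :=
  let ⟨C, hC⟩ := hs.exists_bound_of_continuousOn hg
  ⟨C, fun x => hC _ (hΦ x)⟩

theorem stmt_2_general (f : ℝ → ℝ) (hf : ContDiff ℝ 1 f)
    (c : ℝ) (Φ : ℝ → ℝ) (hΦ : ContDiff ℝ 2 Φ)
    (hode : ∀ x : ℝ, deriv (deriv Φ) x + c * deriv Φ x + f (Φ x) = 0)
    (hrange : ∀ x : ℝ, 0 ≤ Φ x ∧ Φ x ≤ 1)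
    (hL2 : Integrable (fun x => (deriv Φ x) ^ 2))
    (hdlim0 : Tendsto (deriv Φ) atBot (nhds 0))
    (hdlim1 : Tendsto (deriv Φ) atTop (nhds 0)) :
    Integrable (fun x => (deriv (deriv Φ) x) ^ 2) ∧
      (∫ x : ℝ, (deriv (deriv Φ) x) ^ 2) =
        ∫ x : ℝ, deriv f (Φ x) * (deriv Φ x) ^ 2 := by
  have hΦ' : ContDiff ℝ 1 (deriv Φ) := hΦ.deriv'
  have hfc : Continuous (deriv f) := hf.continuous_deriv le_rfl
  obtain ⟨M, hM⟩ :=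
    exists_bound_comp_of_forall_mem_isCompact isCompact_Icc hf.continuous.continuousOn hrange
  obtain ⟨L, hL⟩ := exists_bound_comp_of_forall_mem_isCompact isCompact_Icc hfc.continuousOn hrange
  have hflux : ∀ l : Filter ℝ, Tendsto (deriv Φ) l (𝓝 0) →
      Tendsto (fun y => c / 2 * deriv Φ y ^ 2 + f (Φ y) * deriv Φ y) l (𝓝 0) := fun l hl => by
    simpa using ((hl.pow 2).const_mul (c / 2)).add
      (isBoundedUnder_le_mul_tendsto_zero (isBoundedUnder_of ⟨M, fun y => hM y⟩) hl)
  have h := integrable_and_integral_eq_of_hasDerivAt_sub (g := fun x => deriv (deriv Φ) x ^ 2)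
    (h := fun x => deriv f (Φ x) * deriv Φ x ^ 2)
    ((hΦ'.continuous_deriv le_rfl).pow 2).locallyIntegrable (fun x => sq_nonneg _)
    (hL2.bdd_mul (hfc.comp hΦ.continuous).aestronglyMeasurable (ae_of_all _ hL))
    (fun x => hasDerivAt_travellingWave_flux ((hf.differentiable one_ne_zero) _)
      ((hΦ.differentiable (by norm_num)) x) ((hΦ'.differentiable one_ne_zero) x) (hode x))
    (hflux _ hdlim0) (hflux _ hdlim1)
  simpa only [sub_self, sub_zero] using h

/-- For a bounded travelling-wave profile with `Φ' ∈ L²` and `Φ'(±∞) = 0`,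
one has `Φ'' ∈ L²` and `∫ (Φ'')² = ∫ f'(Φ)(Φ')²`. -/
theorem stmt_2 (f : ℝ → ℝ) (hf : ContDiff ℝ 1 f) (hf0 : f 0 = 0) (hf1 : f 1 = 0)
    (c : ℝ) (Φ : ℝ → ℝ) (hΦ : ContDiff ℝ 2 Φ)
    (hode : ∀ x : ℝ, deriv (deriv Φ) x + c * deriv Φ x + f (Φ x) = 0)
    (hrange : ∀ x : ℝ, 0 ≤ Φ x ∧ Φ x ≤ 1)
    (hL2 : Integrable (fun x => (deriv Φ x) ^ 2))
    (hdlim0 : Tendsto (deriv Φ) atBot (nhds 0))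
    (hdlim1 : Tendsto (deriv Φ) atTop (nhds 0)) :
    Integrable (fun x => (deriv (deriv Φ) x) ^ 2) ∧
      (∫ x : ℝ, (deriv (deriv Φ) x) ^ 2) =
        ∫ x : ℝ, deriv f (Φ x) * (deriv Φ x) ^ 2 :=
  stmt_2_general f hf c Φ hΦ hode hrange hL2 hdlim0 hdlim1
end

section
/- Consider the planar autonomous system U' = V, V' = -cV - f(U), where f is continuous with f(0) = f(1) = 0, f < 0 on (0,α), f > 0 on (α,1) for some α ∈ (0,1). Let (U,V) : [0,r] → ℝ² be a solution with U(0) = 0, V(0) = θ > 0, U(r) = 1, V(r) = Υ > 0, and 0 ≤ U(ξ) ≤ 1 for all ξ ∈ [0,r]. Then V(ξ) > 0 for all ξ ∈ [0,r], and consequently U is strictly increasing on [0,r]. -/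
/-!
Suppose `V` vanishes somewhere and let `c ≤ 0`. At the last zero `ξ` of `V` we must have
`U ξ < α`: otherwise `U` increases from `U ξ ≥ α` to `1` after `ξ`, so `f ∘ U ≥ 0` there and
`V e^{cξ}` is nonincreasing, contradicting `V r > 0`. But the energy `V²/2 + ∫₀^U f` is
nondecreasing when `c ≤ 0`, and it would pass from `θ²/2 > 0` to `∫₀^{U ξ} f ≤ 0`.
For `c ≥ 0` the same argument runs backwards from the first zero of `V`, using `U r = 1`.
-/

open Set Real

theorem nonpos_of_neg_on_Ioo {f : ℝ → ℝ} (hf : Continuous f) {a b : ℝ} (hab : a < b)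
    (h : ∀ u ∈ Ioo a b, f u < 0) : ∀ u ∈ Icc a b, f u ≤ 0 := by
  rw [← closure_Ioo hab.ne]
  exact closure_minimal (fun u hu => (h u hu).le) (isClosed_le hf continuous_const)

theorem nonneg_of_pos_on_Ioo {f : ℝ → ℝ} (hf : Continuous f) {a b : ℝ} (hab : a < b)
    (h : ∀ u ∈ Ioo a b, 0 < f u) : ∀ u ∈ Icc a b, 0 ≤ f u := by
  rw [← closure_Ioo hab.ne]
  exact closure_minimal (fun u hu => (h u hu).le) (isClosed_le continuous_const hf)

theorem hasDerivWithinAt_interior_Icc {g g' : ℝ → ℝ} {a b : ℝ}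
    (hg : ∀ x ∈ Icc a b, HasDerivAt g (g' x) x) :
    ∀ x ∈ interior (Icc a b), HasDerivWithinAt g (g' x) (interior (Icc a b)) x := by
  rw [interior_Icc]
  exact fun x hx => (hg x (Ioo_subset_Icc_self hx)).hasDerivWithinAt

theorem monotoneOn_Icc_of_hasDerivAt_nonneg {g g' : ℝ → ℝ} {a b : ℝ}
    (hg : ∀ x ∈ Icc a b, HasDerivAt g (g' x) x) (h : ∀ x ∈ Ioo a b, 0 ≤ g' x) :
    MonotoneOn g (Icc a b) :=
  monotoneOn_of_hasDerivWithinAt_nonneg (convex_Icc a b)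
    (fun x hx => (hg x hx).continuousAt.continuousWithinAt)
    (hasDerivWithinAt_interior_Icc hg) (by rwa [interior_Icc])

theorem antitoneOn_Icc_of_hasDerivAt_nonpos {g g' : ℝ → ℝ} {a b : ℝ}
    (hg : ∀ x ∈ Icc a b, HasDerivAt g (g' x) x) (h : ∀ x ∈ Ioo a b, g' x ≤ 0) :
    AntitoneOn g (Icc a b) :=
  antitoneOn_of_hasDerivWithinAt_nonpos (convex_Icc a b)
    (fun x hx => (hg x hx).continuousAt.continuousWithinAt)
    (hasDerivWithinAt_interior_Icc hg) (by rwa [interior_Icc])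

theorem strictMonoOn_Icc_of_hasDerivAt_pos {g g' : ℝ → ℝ} {a b : ℝ}
    (hg : ∀ x ∈ Icc a b, HasDerivAt g (g' x) x) (h : ∀ x ∈ Ioo a b, 0 < g' x) :
    StrictMonoOn g (Icc a b) :=
  strictMonoOn_of_hasDerivWithinAt_pos (convex_Icc a b)
    (fun x hx => (hg x hx).continuousAt.continuousWithinAt)
    (hasDerivWithinAt_interior_Icc hg) (by rwa [interior_Icc])

theorem exists_last_zero {α : Type*} [ConditionallyCompleteLinearOrder α] [TopologicalSpace α]
    [OrderTopology α] [DenselyOrdered α] {V : α → ℝ} {a b ξ₀ : α}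
    (hV : ContinuousOn V (Icc a b)) (hξ₀ : ξ₀ ∈ Icc a b) (hVξ₀ : V ξ₀ ≤ 0) (hVb : 0 < V b) :
    ∃ ξ ∈ Ico a b, V ξ = 0 ∧ ∀ η ∈ Ioc ξ b, 0 < V η := by
  have zero_mem {x : α} (hx : x ∈ Icc a b) (hVx : V x ≤ 0) : ∃ ζ ∈ Icc x b, V ζ = 0 :=
    intermediate_value_Icc hx.2 (hV.mono (Icc_subset_Icc hx.1 le_rfl)) ⟨hVx, hVb.le⟩
  have hZ : IsClosed (Icc a b ∩ V ⁻¹' {0}) :=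
    hV.preimage_isClosed_of_isClosed isClosed_Icc isClosed_singleton
  obtain ⟨ζ, hζ, hVζ⟩ := zero_mem hξ₀ hVξ₀
  obtain ⟨ξ, ⟨hξ, hVξ⟩, hlast⟩ :=
    (isCompact_Icc.of_isClosed_subset hZ inter_subset_left).exists_isGreatest
      ⟨ζ, ⟨hξ₀.1.trans hζ.1, hζ.2⟩, hVζ⟩
  refine ⟨ξ, ⟨hξ.1, hξ.2.lt_of_ne ?_⟩, hVξ, fun η hη => ?_⟩
  · rintro rfl
    exact hVb.ne' hVξ
  by_contra! hVη
  obtain ⟨ζ', hζ', hVζ'⟩ := zero_mem ⟨hξ.1.trans hη.1.le, hη.2⟩ hVη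
  exact (hη.1.trans_le hζ'.1).not_ge (hlast ⟨⟨hξ.1.trans (hη.1.le.trans hζ'.1), hζ'.2⟩, hVζ'⟩)

theorem exists_first_zero {α : Type*} [ConditionallyCompleteLinearOrder α] [TopologicalSpace α]
    [OrderTopology α] [DenselyOrdered α] {V : α → ℝ} {a b ξ₀ : α}
    (hV : ContinuousOn V (Icc a b)) (hξ₀ : ξ₀ ∈ Icc a b) (hVξ₀ : V ξ₀ ≤ 0) (hVa : 0 < V a) :
    ∃ ξ ∈ Ioc a b, V ξ = 0 ∧ ∀ η ∈ Ico a ξ, 0 < V η := by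
  obtain ⟨ξ, hξ, hVξ, hpos⟩ := exists_last_zero (α := αᵒᵈ) (V := V ∘ OrderDual.ofDual)
    (a := OrderDual.toDual b) (b := OrderDual.toDual a) (ξ₀ := OrderDual.toDual ξ₀)
    (by rw [Icc_toDual]; exact hV) (by rw [Icc_toDual]; exact hξ₀) hVξ₀ hVa
  rw [Ico_toDual] at hξ
  exact ⟨ξ, hξ, hVξ, fun η hη => hpos (OrderDual.toDual η) ⟨hη.2, hη.1⟩⟩

noncomputable def energy (f : ℝ → ℝ) (u v : ℝ) : ℝ := v ^ 2 / 2 + ∫ t in (0 : ℝ)..u, f t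

section TravellingWave

variable {f : ℝ → ℝ} {c : ℝ} {U V : ℝ → ℝ} {s : Set ℝ}

theorem hasDerivAt_energy (hf : Continuous f) (hU : ∀ ξ ∈ s, HasDerivAt U (V ξ) ξ)
    (hV : ∀ ξ ∈ s, HasDerivAt V (-c * V ξ - f (U ξ)) ξ) :
    ∀ ξ ∈ s, HasDerivAt (fun ξ => energy f (U ξ) (V ξ)) (-c * V ξ ^ 2) ξ := by
  intro ξ hξ
  have hF : HasDerivAt (fun u => ∫ t in (0 : ℝ)..u, f t) (f (U ξ)) (U ξ) :=
    intervalIntegral.integral_hasDerivAt_right (hf.intervalIntegrable 0 _)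
      (hf.stronglyMeasurableAtFilter _ _) hf.continuousAt
  exact ((((hV ξ hξ).pow 2).div_const 2).add (hF.comp ξ (hU ξ hξ))).congr_deriv
    (by push_cast; ring)

theorem hasDerivAt_mul_exp (hV : ∀ ξ ∈ s, HasDerivAt V (-c * V ξ - f (U ξ)) ξ) :
    ∀ ξ ∈ s, HasDerivAt (fun ξ => V ξ * exp (c * ξ)) (-f (U ξ) * exp (c * ξ)) ξ := by
  intro ξ hξ
  exact ((hV ξ hξ).mul ((hasDerivAt_id' ξ).const_mul c).exp).congr_deriv (by ring)

theorem monotoneOn_energy (hf : Continuous f) (hc : c ≤ 0)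
    (hU : ∀ ξ ∈ s, HasDerivAt U (V ξ) ξ) (hV : ∀ ξ ∈ s, HasDerivAt V (-c * V ξ - f (U ξ)) ξ)
    {a b : ℝ} (hs : Icc a b ⊆ s) : MonotoneOn (fun ξ => energy f (U ξ) (V ξ)) (Icc a b) :=
  monotoneOn_Icc_of_hasDerivAt_nonneg (fun x hx => hasDerivAt_energy hf hU hV x (hs hx))
    fun x _ => by nlinarith [sq_nonneg (V x)]

theorem antitoneOn_energy (hf : Continuous f) (hc : 0 ≤ c)
    (hU : ∀ ξ ∈ s, HasDerivAt U (V ξ) ξ) (hV : ∀ ξ ∈ s, HasDerivAt V (-c * V ξ - f (U ξ)) ξ)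
    {a b : ℝ} (hs : Icc a b ⊆ s) : AntitoneOn (fun ξ => energy f (U ξ) (V ξ)) (Icc a b) :=
  antitoneOn_Icc_of_hasDerivAt_nonpos (fun x hx => hasDerivAt_energy hf hU hV x (hs hx))
    fun x _ => by nlinarith [sq_nonneg (V x)]

theorem antitoneOn_mul_exp (hV : ∀ ξ ∈ s, HasDerivAt V (-c * V ξ - f (U ξ)) ξ)
    {a b : ℝ} (hs : Icc a b ⊆ s) (hfU : ∀ x ∈ Ioo a b, 0 ≤ f (U x)) :
    AntitoneOn (fun ξ => V ξ * exp (c * ξ)) (Icc a b) :=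
  antitoneOn_Icc_of_hasDerivAt_nonpos (fun x hx => hasDerivAt_mul_exp hV x (hs hx))
    fun x hx => by nlinarith [hfU x hx, exp_pos (c * x)]

theorem monotoneOn_mul_exp (hV : ∀ ξ ∈ s, HasDerivAt V (-c * V ξ - f (U ξ)) ξ)
    {a b : ℝ} (hs : Icc a b ⊆ s) (hfU : ∀ x ∈ Ioo a b, f (U x) ≤ 0) :
    MonotoneOn (fun ξ => V ξ * exp (c * ξ)) (Icc a b) :=
  monotoneOn_Icc_of_hasDerivAt_nonneg (fun x hx => hasDerivAt_mul_exp hV x (hs hx))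
    fun x hx => by nlinarith [hfU x hx, exp_pos (c * x)]

end TravellingWave

section SimpleSolution

variable {f : ℝ → ℝ} {α c r : ℝ} {U V : ℝ → ℝ}

theorem velocity_pos_of_wave_speed_nonpos (hf : Continuous f)
    (hf_nonpos : ∀ u ∈ Icc 0 α, f u ≤ 0) (hf_nonneg : ∀ u ∈ Icc α 1, 0 ≤ f u) (hc : c ≤ 0)
    (hU : ∀ ξ ∈ Icc 0 r, HasDerivAt U (V ξ) ξ)
    (hV : ∀ ξ ∈ Icc 0 r, HasDerivAt V (-c * V ξ - f (U ξ)) ξ)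
    (hU0 : U 0 = 0) (hV0 : 0 < V 0) (hVr : 0 < V r)
    (hrange : ∀ ξ ∈ Icc 0 r, 0 ≤ U ξ ∧ U ξ ≤ 1) :
    ∀ ξ ∈ Icc 0 r, 0 < V ξ := by
  by_contra! ⟨ξ₀, hξ₀, hVξ₀⟩
  obtain ⟨ξ, hξ, hVξ, hpos⟩ :=
    exists_last_zero (fun x hx => (hV x hx).continuousAt.continuousWithinAt) hξ₀ hVξ₀ hVr
  have hξr : Icc ξ r ⊆ Icc 0 r := Icc_subset_Icc_left hξ.1
  have hUξ : U ξ < α := by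
    by_contra! hαU
    have hUmono : MonotoneOn U (Icc ξ r) :=
      monotoneOn_Icc_of_hasDerivAt_nonneg (fun x hx => hU x (hξr hx))
        fun x hx => (hpos x (Ioo_subset_Ioc_self hx)).le
    have hW := antitoneOn_mul_exp hV hξr fun x hx => hf_nonneg (U x)
      ⟨hαU.trans (hUmono (left_mem_Icc.2 hξ.2.le) (Ioo_subset_Icc_self hx) hx.1.le),
        (hrange x (hξr (Ioo_subset_Icc_self hx))).2⟩
    have := hW (left_mem_Icc.2 hξ.2.le) (right_mem_Icc.2 hξ.2.le) hξ.2.le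
    simp only [hVξ, zero_mul] at this
    exact (mul_pos hVr (exp_pos _)).not_ge this
  have hF : ∫ t in (0 : ℝ)..U ξ, f t ≤ 0 := by
    have : 0 ≤ ∫ t in (0 : ℝ)..U ξ, -f t :=
      intervalIntegral.integral_nonneg (hrange ξ (hξr (left_mem_Icc.2 hξ.2.le))).1
        fun u hu => neg_nonneg.2 (hf_nonpos u ⟨hu.1, hu.2.trans hUξ.le⟩)
    rwa [intervalIntegral.integral_neg, neg_nonneg] at this
  have hE := monotoneOn_energy hf hc hU hV subset_rfl (left_mem_Icc.2 (hξ.1.trans hξ.2.le))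
    (hξr (left_mem_Icc.2 hξ.2.le)) hξ.1
  simp only [energy, hU0, hVξ, intervalIntegral.integral_same] at hE
  nlinarith

theorem velocity_pos_of_wave_speed_nonneg (hf : Continuous f)
    (hf_nonpos : ∀ u ∈ Icc 0 α, f u ≤ 0) (hf_nonneg : ∀ u ∈ Icc α 1, 0 ≤ f u) (hc : 0 ≤ c)
    (hU : ∀ ξ ∈ Icc 0 r, HasDerivAt U (V ξ) ξ)
    (hV : ∀ ξ ∈ Icc 0 r, HasDerivAt V (-c * V ξ - f (U ξ)) ξ)
    (hU0 : U 0 = 0) (hV0 : 0 < V 0) (hUr : U r = 1) (hVr : 0 < V r)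
    (hrange : ∀ ξ ∈ Icc 0 r, 0 ≤ U ξ ∧ U ξ ≤ 1) :
    ∀ ξ ∈ Icc 0 r, 0 < V ξ := by
  by_contra! ⟨ξ₀, hξ₀, hVξ₀⟩
  obtain ⟨ξ, hξ, hVξ, hpos⟩ :=
    exists_first_zero (fun x hx => (hV x hx).continuousAt.continuousWithinAt) hξ₀ hVξ₀ hV0
  have h0ξ : Icc 0 ξ ⊆ Icc 0 r := Icc_subset_Icc_right hξ.2
  have hUξ : α < U ξ := by
    by_contra! hUα
    have hUmono : MonotoneOn U (Icc 0 ξ) :=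
      monotoneOn_Icc_of_hasDerivAt_nonneg (fun x hx => hU x (h0ξ hx))
        fun x hx => (hpos x (Ioo_subset_Ico_self hx)).le
    have hW := monotoneOn_mul_exp hV h0ξ fun x hx => hf_nonpos (U x)
      ⟨hU0 ▸ hUmono (left_mem_Icc.2 hξ.1.le) (Ioo_subset_Icc_self hx) hx.1.le,
        (hUmono (Ioo_subset_Icc_self hx) (right_mem_Icc.2 hξ.1.le) hx.2.le).trans hUα⟩
    have := hW (left_mem_Icc.2 hξ.1.le) (right_mem_Icc.2 hξ.1.le) hξ.1.le
    simp only [hVξ, zero_mul, mul_zero, exp_zero, mul_one] at this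
    exact hV0.not_ge this
  have hF : ∫ t in (0 : ℝ)..U ξ, f t ≤ ∫ t in (0 : ℝ)..1, f t := by
    rw [← sub_nonneg, intervalIntegral.integral_interval_sub_left (hf.intervalIntegrable _ _)
      (hf.intervalIntegrable _ _)]
    exact intervalIntegral.integral_nonneg (hrange ξ (h0ξ (right_mem_Icc.2 hξ.1.le))).2
      fun u hu => hf_nonneg u ⟨hUξ.le.trans hu.1, hu.2⟩
  have hE := antitoneOn_energy hf hc hU hV subset_rfl (h0ξ (right_mem_Icc.2 hξ.1.le))
    (right_mem_Icc.2 (hξ₀.1.trans hξ₀.2)) hξ.2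
  simp only [energy, hUr, hVξ] at hE
  nlinarith

end SimpleSolution

theorem stmt_3_general (f : ℝ → ℝ) (hf : Continuous f)
    (α : ℝ) (hα : α ∈ Ioo (0:ℝ) 1)
    (hfneg : ∀ u ∈ Ioo (0:ℝ) α, f u < 0)
    (hfpos : ∀ u ∈ Ioo α (1:ℝ), f u > 0)
    (c r θ Υ : ℝ) (hθ : 0 < θ) (hΥ : 0 < Υ)
    (U V : ℝ → ℝ)
    (hU : ∀ ξ ∈ Icc (0:ℝ) r, HasDerivAt U (V ξ) ξ)
    (hV : ∀ ξ ∈ Icc (0:ℝ) r, HasDerivAt V (-c * V ξ - f (U ξ)) ξ)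
    (hU0 : U 0 = 0) (hV0 : V 0 = θ) (hUr : U r = 1) (hVr : V r = Υ)
    (hrange : ∀ ξ ∈ Icc (0:ℝ) r, 0 ≤ U ξ ∧ U ξ ≤ 1) :
    (∀ ξ ∈ Icc (0:ℝ) r, 0 < V ξ) ∧ StrictMonoOn U (Icc (0:ℝ) r) := by
  have hf_nonpos := nonpos_of_neg_on_Ioo hf hα.1 hfneg
  have hf_nonneg := nonneg_of_pos_on_Ioo hf hα.2 hfpos
  have hVpos : ∀ ξ ∈ Icc (0:ℝ) r, 0 < V ξ := by
    rcases le_total c 0 with hc | hc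
    · exact velocity_pos_of_wave_speed_nonpos hf hf_nonpos hf_nonneg hc hU hV hU0 (hV0 ▸ hθ)
        (hVr ▸ hΥ) hrange
    · exact velocity_pos_of_wave_speed_nonneg hf hf_nonpos hf_nonneg hc hU hV hU0 (hV0 ▸ hθ) hUr
        (hVr ▸ hΥ) hrange
  exact ⟨hVpos, strictMonoOn_Icc_of_hasDerivAt_pos hU fun x hx => hVpos x (Ioo_subset_Icc_self hx)⟩

/-- A "simple solution" of `U' = V`, `V' = -cV - f(U)` joining `(0,θ)` to `(1,Υ)`
with `θ, Υ > 0` and `0 ≤ U ≤ 1` has `V > 0` throughout, hence `U` is strictly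
increasing. -/
theorem stmt_3 (f : ℝ → ℝ) (hf : Continuous f) (hf0 : f 0 = 0) (hf1 : f 1 = 0)
    (α : ℝ) (hα : α ∈ Ioo (0:ℝ) 1)
    (hfneg : ∀ u ∈ Ioo (0:ℝ) α, f u < 0)
    (hfpos : ∀ u ∈ Ioo α (1:ℝ), f u > 0)
    (c r θ Υ : ℝ) (hr : 0 < r) (hθ : 0 < θ) (hΥ : 0 < Υ)
    (U V : ℝ → ℝ)
    (hU : ∀ ξ ∈ Icc (0:ℝ) r, HasDerivAt U (V ξ) ξ)
    (hV : ∀ ξ ∈ Icc (0:ℝ) r, HasDerivAt V (-c * V ξ - f (U ξ)) ξ)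
    (hU0 : U 0 = 0) (hV0 : V 0 = θ) (hUr : U r = 1) (hVr : V r = Υ)
    (hrange : ∀ ξ ∈ Icc (0:ℝ) r, 0 ≤ U ξ ∧ U ξ ≤ 1) :
    (∀ ξ ∈ Icc (0:ℝ) r, 0 < V ξ) ∧ StrictMonoOn U (Icc (0:ℝ) r) :=
  stmt_3_general f hf α hα hfneg hfpos c r θ Υ hθ hΥ U V hU hV hU0 hV0 hUr hVr hrange
end

section
/- Let f : [0,1] → ℝ be continuous with |f|_∞ = max_{0≤s≤1} |f(s)|, let c ∈ ℝ, and suppose θ > |c| + |f|_∞ + 1. Then the solution of U' = V, V' = -cV - f(U) starting at (U,V) = (0,θ) reaches the line U = 1 at a point (1,Υ) with Υ ≥ θ - |c| - |f|_∞, and along the whole orbit V ≥ θ - (|c| + |f|_∞)·U > 1 for 0 ≤ U ≤ 1. In particular, writing the orbit as V = P(U), one has P(U) ≥ θ - (|c| + |f|_∞)U for all U ∈ [0,1]. -/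
/-!
With `K = |c| + M`, the quantity `V + K U` is nondecreasing along the orbit as long as `V ≥ 1`:
its derivative is `(K - c) V - f(U) ≥ M V - M ≥ 0`. Hence, before `V` first drops to `1`,
`V ≥ θ - K U ≥ θ - K > 1`, so `V` never drops to `1`, and the bound `V ≥ θ - K U` holds on the
whole orbit. Every `u ∈ [0,1]` is some `U ξ` by the intermediate value theorem, which transfers the
bound to the graph `P`.
-/

open Set

theorem ContinuousOn.forall_lt_of_forall_Ico_lt {φ : ℝ → ℝ} {a b ℓ : ℝ}
    (hφ : ContinuousOn φ (Icc a b))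
    (h : ∀ t ∈ Icc a b, (∀ s ∈ Ico a t, ℓ < φ s) → ℓ < φ t) :
    ∀ t ∈ Icc a b, ℓ < φ t := by
  by_contra! hex
  set S := Icc a b ∩ φ ⁻¹' Iic ℓ
  have hSbdd : BddBelow S := ⟨a, fun x hx => hx.1.1⟩
  have hfirst : sInf S ∈ S :=
    (hφ.preimage_isClosed_of_isClosed isClosed_Icc isClosed_Iic).csInf_mem hex hSbdd
  refine (h _ hfirst.1 fun s hs => ?_).not_ge hfirst.2
  by_contra! hsℓ
  exact hs.2.not_ge (csInf_le hSbdd ⟨⟨hs.1, hs.2.le.trans hfirst.1.2⟩, hsℓ⟩)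

theorem neg_mul_sub_add_abs_add_mul_nonneg {c M v w : ℝ} (hw : |w| ≤ M) (hv : 1 ≤ v) :
    0 ≤ -c * v - w + (|c| + M) * v := by
  have hc : 0 ≤ (|c| - c) * v := mul_nonneg (sub_nonneg.mpr (le_abs_self c)) (by linarith)
  have hM : M ≤ M * v := le_mul_of_one_le_right ((abs_nonneg w).trans hw) hv
  linarith [le_abs_self w]

theorem monotoneOn_add_abs_add_mul_of_one_le {f U V : ℝ → ℝ} {a b c M : ℝ}
    (hU : ∀ ξ ∈ Icc a b, HasDerivAt U (V ξ) ξ)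
    (hV : ∀ ξ ∈ Icc a b, HasDerivAt V (-c * V ξ - f (U ξ)) ξ)
    (hf : ∀ ξ ∈ Ioo a b, |f (U ξ)| ≤ M) (hV1 : ∀ ξ ∈ Ioo a b, 1 ≤ V ξ) :
    MonotoneOn (fun ξ => V ξ + (|c| + M) * U ξ) (Icc a b) := by
  have hderiv : ∀ ξ ∈ Icc a b,
      HasDerivAt (fun ξ => V ξ + (|c| + M) * U ξ) (-c * V ξ - f (U ξ) + (|c| + M) * V ξ) ξ :=
    fun ξ hξ => (hV ξ hξ).add ((hU ξ hξ).const_mul _)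
  refine monotoneOn_of_hasDerivWithinAt_nonneg
    (f' := fun ξ => -c * V ξ - f (U ξ) + (|c| + M) * V ξ) (convex_Icc a b)
    (fun ξ hξ => (hderiv ξ hξ).continuousAt.continuousWithinAt) (fun ξ hξ => ?_) (fun ξ hξ => ?_)
  all_goals rw [interior_Icc] at hξ
  · exact (hderiv ξ (Ioo_subset_Icc_self hξ)).hasDerivWithinAt
  · exact neg_mul_sub_add_abs_add_mul_nonneg (hf ξ hξ) (hV1 ξ hξ)

/-- For `θ > |c| + |f|_∞ + 1`, the orbit starting at `(0,θ)` stays above the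
line `V = θ - (|c| + |f|_∞)U > 1`, so it reaches `U = 1` at a height
`Υ ≥ θ - |c| - |f|_∞`; in graph form, `P(U) ≥ θ - (|c| + |f|_∞)U` on `[0,1]`. -/
theorem stmt_6 (f : ℝ → ℝ) (hf : ContinuousOn f (Icc (0:ℝ) 1))
    (M : ℝ) (hM : M = sSup ((fun s => |f s|) '' Icc (0:ℝ) 1))
    (c θ : ℝ) (hθ : |c| + M + 1 < θ)
    (r : ℝ) (hr : 0 < r) (U V P : ℝ → ℝ)
    (hU : ∀ ξ ∈ Icc (0:ℝ) r, HasDerivAt U (V ξ) ξ)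
    (hV : ∀ ξ ∈ Icc (0:ℝ) r, HasDerivAt V (-c * V ξ - f (U ξ)) ξ)
    (hU0 : U 0 = 0) (hV0 : V 0 = θ) (hUr : U r = 1)
    (hrange : ∀ ξ ∈ Icc (0:ℝ) r, 0 ≤ U ξ ∧ U ξ ≤ 1)
    (hgraph : ∀ ξ ∈ Icc (0:ℝ) r, P (U ξ) = V ξ) :
    (θ - |c| - M ≤ V r) ∧
      (∀ ξ ∈ Icc (0:ℝ) r, θ - (|c| + M) * U ξ ≤ V ξ ∧ 1 < V ξ) ∧
      (∀ u ∈ Icc (0:ℝ) 1, θ - (|c| + M) * u ≤ P u) := by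
  have hfU : ∀ ξ ∈ Icc 0 r, |f (U ξ)| ≤ M := fun ξ hξ => hM ▸
    le_csSup (isCompact_Icc.image_of_continuousOn hf.abs).bddAbove (mem_image_of_mem _ (hrange ξ hξ))
  have hM0 : 0 ≤ M := (abs_nonneg _).trans (hfU 0 ⟨le_rfl, hr.le⟩)
  have henergy : ∀ t ∈ Icc 0 r, (∀ s ∈ Ioo 0 t, 1 ≤ V s) → θ ≤ V t + (|c| + M) * U t :=
    fun t ht hV1 => by
      have hsub : Icc 0 t ⊆ Icc 0 r := Icc_subset_Icc_right ht.2
      have hmono := monotoneOn_add_abs_add_mul_of_one_le (fun ξ hξ => hU ξ (hsub hξ))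
        (fun ξ hξ => hV ξ (hsub hξ)) (fun ξ hξ => hfU ξ (hsub (Ioo_subset_Icc_self hξ))) hV1
      simpa [hU0, hV0] using hmono ⟨le_rfl, ht.1⟩ ⟨ht.1, le_rfl⟩ ht.1
  have hV1 : ∀ ξ ∈ Icc 0 r, 1 < V ξ :=
    ContinuousOn.forall_lt_of_forall_Ico_lt (fun ξ hξ => (hV ξ hξ).continuousAt.continuousWithinAt)
      fun t ht hlt => by
        have := henergy t ht fun s hs => (hlt s (Ioo_subset_Ico_self hs)).le
        nlinarith [hrange t ht, abs_nonneg c]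
  have hbound : ∀ ξ ∈ Icc 0 r, θ ≤ V ξ + (|c| + M) * U ξ :=
    fun ξ hξ => henergy ξ hξ fun s hs => (hV1 s ⟨hs.1.le, hs.2.le.trans hξ.2⟩).le
  refine ⟨?_, fun ξ hξ => ⟨by linarith [hbound ξ hξ], hV1 ξ hξ⟩, fun u hu => ?_⟩
  · linarith [hUr ▸ hbound r ⟨hr.le, le_rfl⟩]
  · obtain ⟨ξ, hξ, rfl⟩ := intermediate_value_Icc hr.le
      (fun ξ hξ => (hU ξ hξ).continuousAt.continuousWithinAt) (hU0 ▸ hUr ▸ hu)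
    linarith [hbound ξ hξ, hgraph ξ hξ]
end

section
/- Let f : [0,1] → ℝ be continuous and θ₀ > 0. Then there exists c₀ = |f|_∞/θ₀ > 0 such that for every c > c₀, any simple solution of U' = V, V' = -cV - f(U) starting at (0,θ) with θ ≥ θ₀ and reaching (1,Υ) satisfies Υ < θ; indeed the whole orbit stays strictly below the line V = θ after leaving it. -/
/-!
On the line `V = θ` the vertical component of the field is `-c θ - f U ≤ M - c θ < 0`, since
`M < c θ₀ ≤ c θ`. Hence the line is a barrier crossed only downwards, and an orbit starting on it
stays strictly below it afterwards.
-/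

open Set Filter Topology

theorem HasDerivAt.eventually_lt_nhdsLT {g : ℝ → ℝ} {g' x : ℝ} (hg : HasDerivAt g g' x)
    (hg' : g' < 0) : ∀ᶠ t in 𝓝[<] x, g x < g t := by
  have hslope : Tendsto (slope g x) (𝓝[<] x) (𝓝 g') :=
    (hasDerivAt_iff_tendsto_slope_left_right.mp hg).1
  filter_upwards [hslope.eventually (gt_mem_nhds hg'), self_mem_nhdsWithin] with t hneg htx
  rw [slope_comm] at hneg
  exact (slope_neg_iff_of_le (le_of_lt htx)).mp hneg

theorem lt_of_hasDerivAt_neg_at_level {g g' : ℝ → ℝ} {a b θ : ℝ}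
    (hg : ∀ x ∈ Icc a b, HasDerivAt g (g' x) x) (ha : g a ≤ θ)
    (hlevel : ∀ x ∈ Icc a b, g x = θ → g' x < 0) : ∀ x ∈ Ioc a b, g x < θ := by
  have hle : ∀ x ∈ Icc a b, g x ≤ θ :=
    image_le_of_deriv_right_lt_deriv_boundary (B := fun _ => θ) (B' := fun _ => 0)
      (fun x hx => (hg x hx).continuousAt.continuousWithinAt)
      (fun x hx => (hg x (Ico_subset_Icc_self hx)).hasDerivWithinAt) ha
      (fun _ => hasDerivAt_const _ _) (fun x hx => hlevel x (Ico_subset_Icc_self hx))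
  intro x hx
  refine (hle x (Ioc_subset_Icc_self hx)).lt_of_ne fun hxθ => ?_
  obtain ⟨t, hgt, ht⟩ := (((hg x (Ioc_subset_Icc_self hx)).eventually_lt_nhdsLT
    (hlevel x (Ioc_subset_Icc_self hx) hxθ)).and (Ioo_mem_nhdsLT hx.1)).exists
  exact (hle t ⟨ht.1.le, ht.2.le.trans hx.2⟩).not_gt (hxθ ▸ hgt)

theorem stmt_7_general (f : ℝ → ℝ) (hf : ContinuousOn f (Icc (0:ℝ) 1))
    (M : ℝ) (hM : M = sSup ((fun s => |f s|) '' Icc (0:ℝ) 1))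
    (θ₀ : ℝ) (hθ₀ : 0 < θ₀) (c : ℝ) (hc : M / θ₀ < c)
    (θ Υ r : ℝ) (hθ : θ₀ ≤ θ) (hr : 0 < r)
    (U V : ℝ → ℝ)
    (hV : ∀ ξ ∈ Icc (0:ℝ) r, HasDerivAt V (-c * V ξ - f (U ξ)) ξ)
    (hV0 : V 0 = θ) (hVr : V r = Υ)
    (hrange : ∀ ξ ∈ Icc (0:ℝ) r, 0 ≤ U ξ ∧ U ξ ≤ 1) :
    Υ < θ ∧ ∀ ξ ∈ Ioc (0:ℝ) r, V ξ < θ := by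
  have hfM : ∀ s ∈ Icc (0:ℝ) 1, |f s| ≤ M := fun s hs => hM ▸ hf.abs.le_sSup_image_Icc hs
  have hM0 : 0 ≤ M := (abs_nonneg _).trans (hfM 0 (left_mem_Icc.2 zero_le_one))
  have hMθ : M < c * θ := calc
    M < c * θ₀ := (div_lt_iff₀ hθ₀).1 hc
    _ ≤ c * θ := mul_le_mul_of_nonneg_left hθ ((div_nonneg hM0 hθ₀.le).trans hc.le)
  have hbelow : ∀ ξ ∈ Ioc (0:ℝ) r, V ξ < θ :=
    lt_of_hasDerivAt_neg_at_level hV hV0.le fun ξ hξ hVξ => by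
      have := neg_le_of_abs_le (hfM _ (hrange ξ hξ))
      rw [hVξ]
      linarith
  exact ⟨hVr ▸ hbelow r ⟨hr, le_rfl⟩, hbelow⟩

/-- For speed `c > |f|_∞ / θ₀`, a simple solution starting at `(0,θ)` with
`θ ≥ θ₀` ends at `(1,Υ)` with `Υ < θ`, the orbit staying strictly below the
line `V = θ` after the initial time. -/
theorem stmt_7 (f : ℝ → ℝ) (hf : ContinuousOn f (Icc (0:ℝ) 1))
    (M : ℝ) (hM : M = sSup ((fun s => |f s|) '' Icc (0:ℝ) 1))
    (θ₀ : ℝ) (hθ₀ : 0 < θ₀) (c : ℝ) (hc : M / θ₀ < c)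
    (θ Υ r : ℝ) (hθ : θ₀ ≤ θ) (hΥ : 0 < Υ) (hr : 0 < r)
    (U V : ℝ → ℝ)
    (hU : ∀ ξ ∈ Icc (0:ℝ) r, HasDerivAt U (V ξ) ξ)
    (hV : ∀ ξ ∈ Icc (0:ℝ) r, HasDerivAt V (-c * V ξ - f (U ξ)) ξ)
    (hU0 : U 0 = 0) (hV0 : V 0 = θ) (hUr : U r = 1) (hVr : V r = Υ)
    (hVpos : ∀ ξ ∈ Icc (0:ℝ) r, 0 < V ξ)
    (hrange : ∀ ξ ∈ Icc (0:ℝ) r, 0 ≤ U ξ ∧ U ξ ≤ 1) :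
    Υ < θ ∧ ∀ ξ ∈ Ioc (0:ℝ) r, V ξ < θ :=
  stmt_7_general f hf M hM θ₀ hθ₀ c hc θ Υ r hθ hr U V hV hV0 hVr hrange
end

section
/- Let X be a Banach space, L₀ : D(L₀) ⊆ X → X a closed operator, π : D(L₀) → 𝕜 linear, φ ∈ D(L₀), and L = L₀ + π(·)φ. Assume: (a) L₀φ = 0 and π(φ) = 0; (b) 0 is an algebraically simple eigenvalue of L₀, i.e. Ker(L₀) = span{φ} and there is no w ∈ D(L₀) with L₀w = φ. Then for every μ ∈ ρ(L₀) with μ ≠ 0, μ ∈ ρ(L), and the resolvent is given by (L - μI)^{-1} f = (L₀ - μI)^{-1} f + μ^{-1} π((L₀-μI)^{-1}f)·φ. -/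
/-!
Write `T₀ = L₀ - μ` and `T = L - μ = T₀ + π(·)φ`. Since `L₀φ = 0`, `T₀` acts on the line
through `φ` as multiplication by `-μ`, so the rank-one term `π(w)φ` can be absorbed by a
multiple of `φ`; since `π(φ) = 0`, adding that multiple does not change `π`. Hence
`T(w_f + μ⁻¹π(w_f)φ) = T₀ w_f`, and `Tw = 0` forces `w = μ⁻¹π(w)φ`, whence `π(w) = 0` and `w = 0`.
-/

namespace Submodule

variable {K X : Type*} [Field K] [AddCommGroup X] [Module K X] {dom : Submodule K X}

def shiftOp (A : dom →ₗ[K] X) (μ : K) : dom →ₗ[K] X := A - μ • dom.subtype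

def rankOnePerturb (L₀ : dom →ₗ[K] X) (π : dom →ₗ[K] K) (φ : dom) : dom →ₗ[K] X :=
  L₀ + π.smulRight (φ : X)

variable (L₀ : dom →ₗ[K] X) (π : dom →ₗ[K] K) (φ : dom) (μ : K)

theorem shiftOp_apply (A : dom →ₗ[K] X) (w : dom) : shiftOp A μ w = A w - μ • (w : X) := rfl

theorem shiftOp_rankOnePerturb_apply (w : dom) :
    shiftOp (rankOnePerturb L₀ π φ) μ w = shiftOp L₀ μ w + π w • (φ : X) := by
  simp only [shiftOp_apply, rankOnePerturb, LinearMap.add_apply, LinearMap.smulRight_apply]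
  abel

theorem shiftOp_smul_of_map_eq_zero (hφ0 : L₀ φ = 0) (c : K) :
    shiftOp L₀ μ (c • φ) = -(μ * c) • (φ : X) := by
  rw [shiftOp_apply, map_smul, hφ0, smul_zero, coe_smul]
  module

theorem shiftOp_rankOnePerturb_resolvent (hφ0 : L₀ φ = 0) (hπφ : π φ = 0) (hμ : μ ≠ 0)
    (wf : dom) :
    shiftOp (rankOnePerturb L₀ π φ) μ (wf + (μ⁻¹ * π wf) • φ) = shiftOp L₀ μ wf := by
  rw [shiftOp_rankOnePerturb_apply, map_add, shiftOp_smul_of_map_eq_zero L₀ φ μ hφ0,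
    mul_inv_cancel_left₀ hμ, map_add, map_smul, hπφ, smul_zero, add_zero]
  module

theorem injective_shiftOp_rankOnePerturb (hφ0 : L₀ φ = 0) (hπφ : π φ = 0) (hμ : μ ≠ 0)
    (hinj : Function.Injective (shiftOp L₀ μ)) :
    Function.Injective (shiftOp (rankOnePerturb L₀ π φ) μ) := by
  refine (injective_iff_map_eq_zero _).2 fun w hw => ?_
  have hline : w = (μ⁻¹ * π w) • φ := hinj <| by
    rw [shiftOp_smul_of_map_eq_zero L₀ φ μ hφ0, mul_inv_cancel_left₀ hμ, neg_smul,
      eq_neg_iff_add_eq_zero, ← shiftOp_rankOnePerturb_apply, hw]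
  have hπw : π w = 0 := by
    rw [hline, map_smul, hπφ, smul_zero]
  rw [hline, hπw, mul_zero, zero_smul]

theorem surjective_shiftOp_rankOnePerturb (hφ0 : L₀ φ = 0) (hπφ : π φ = 0) (hμ : μ ≠ 0)
    (hsurj : Function.Surjective (shiftOp L₀ μ)) :
    Function.Surjective (shiftOp (rankOnePerturb L₀ π φ) μ) := fun f => by
  obtain ⟨wf, rfl⟩ := hsurj f
  exact ⟨_, shiftOp_rankOnePerturb_resolvent L₀ π φ μ hφ0 hπφ hμ wf⟩

end Submodule

open Submodule in
theorem stmt_11_general {𝕜 : Type*} [NontriviallyNormedField 𝕜]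
    {X : Type*} [NormedAddCommGroup X] [NormedSpace 𝕜 X]
    (dom : Submodule 𝕜 X) (L₀ : dom →ₗ[𝕜] X) (π : dom →ₗ[𝕜] 𝕜) (φ : dom)
    (hφ0 : L₀ φ = 0) (hπφ : π φ = 0)
    (μ : 𝕜) (hμ : μ ≠ 0)
    (hres : Function.Bijective (fun w : dom => L₀ w - μ • (w : X))) :
    Function.Bijective (fun w : dom => L₀ w + π w • (φ : X) - μ • (w : X)) ∧
      ∀ (f : X) (wf : dom), L₀ wf - μ • (wf : X) = f →
        L₀ (wf + (μ⁻¹ * π wf) • φ)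
            + π (wf + (μ⁻¹ * π wf) • φ) • (φ : X)
            - μ • ((wf + (μ⁻¹ * π wf) • φ : dom) : X) = f := by
  have hres' : Function.Bijective (shiftOp L₀ μ) := hres
  refine ⟨⟨injective_shiftOp_rankOnePerturb L₀ π φ μ hφ0 hπφ hμ hres'.1,
    surjective_shiftOp_rankOnePerturb L₀ π φ μ hφ0 hπφ hμ hres'.2⟩, fun f wf hwf => ?_⟩
  rw [← hwf]
  exact shiftOp_rankOnePerturb_resolvent L₀ π φ μ hφ0 hπφ hμ wf

/-- Rank-one perturbation `L = L₀ + π(·)φ` with `L₀φ = 0`, `π(φ) = 0` and `0`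
algebraically simple for `L₀`: every `μ ∈ ρ(L₀)`, `μ ≠ 0` belongs to `ρ(L)`,
with resolvent `(L-μ)⁻¹f = (L₀-μ)⁻¹f + μ⁻¹π((L₀-μ)⁻¹f)·φ`. -/
theorem stmt_11 {𝕜 : Type*} [NontriviallyNormedField 𝕜]
    {X : Type*} [NormedAddCommGroup X] [NormedSpace 𝕜 X]
    (dom : Submodule 𝕜 X) (L₀ : dom →ₗ[𝕜] X) (π : dom →ₗ[𝕜] 𝕜) (φ : dom)
    (hφ0 : L₀ φ = 0) (hπφ : π φ = 0)
    (hker : ∀ w : dom, L₀ w = 0 → ∃ t : 𝕜, w = t • φ)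
    (hsimple : ¬ ∃ w : dom, L₀ w = (φ : X))
    (μ : 𝕜) (hμ : μ ≠ 0)
    (hres : Function.Bijective (fun w : dom => L₀ w - μ • (w : X))) :
    Function.Bijective (fun w : dom => L₀ w + π w • (φ : X) - μ • (w : X)) ∧
      ∀ (f : X) (wf : dom), L₀ wf - μ • (wf : X) = f →
        L₀ (wf + (μ⁻¹ * π wf) • φ)
            + π (wf + (μ⁻¹ * π wf) • φ) • (φ : X)
            - μ • ((wf + (μ⁻¹ * π wf) • φ : dom) : X) = f :=
  stmt_11_general dom L₀ π φ hφ0 hπφ μ hμ hres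
end

section
/- Let f : [0,1] → ℝ be C¹ with f(0) = f(1) = 0, and consider the initial-boundary value problem u_t = u_xx + λ(u_x)u_x + f(u) on (a,b) with λ(z) = -F(1)/‖z‖²_{L²(a,b)}, u(a,t) = 0, u(b,t) = 1. If u is a classical solution on [0,T] with initial datum satisfying 0 ≤ u₀ ≤ 1, then 0 ≤ u(x,t) ≤ 1 for all x ∈ [a,b] and t ∈ [0,T]. -/
/-!
Maximum principle with an exponential weight. If `u` becomes negative, the weighted function
`e^{-Mt} u` attains a negative minimum over `[a, b] × [0, T]`, which the boundary and initial data
force into the parabolic interior. There `u_x = 0`, `u_xx ≥ 0` and `u_t ≤ M u`, so the nonlocal drift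
term vanishes and the equation gives `K u ≤ f(u) ≤ u_t ≤ M u` for a Lipschitz constant `K` of `f`
near `0`; with `M = K + 1` this contradicts `u < 0`. The bound `u ≤ 1` is the same statement for
`1 - u`, which solves the equation with nonlinearity `s ↦ -f (1 - s)`.
-/

open Set Filter Topology Real

theorem IsLocalMin.nonneg_of_hasDerivAt_hasDerivAt {g g' : ℝ → ℝ} {x₀ g'' : ℝ}
    (hmin : IsLocalMin g x₀) (hg : ∀ᶠ x in 𝓝 x₀, HasDerivAt g (g' x) x)
    (hg' : HasDerivAt g' g'' x₀) : 0 ≤ g'' := by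
  by_contra! hneg
  have hderiv : deriv g =ᶠ[𝓝 x₀] g' := hg.mono fun x hx => hx.deriv
  have hmax : IsLocalMax g x₀ := isLocalMax_of_deriv_deriv_neg
    (by rwa [hderiv.deriv_eq, hg'.deriv])
    (by rw [hderiv.eq_of_nhds]; exact hmin.hasDerivAt_eq_zero hg.self_of_nhds)
    hg.self_of_nhds.continuousAt
  have hconst : ∀ᶠ x in 𝓝 x₀, g x = g x₀ :=
    (hmin.and hmax).mono fun x hx => le_antisymm hx.2 hx.1
  have hzero : g' =ᶠ[𝓝 x₀] 0 := (hconst.eventually_nhds.and hg).mono fun x hx =>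
    hx.2.unique ((hasDerivAt_const x (g x₀)).congr_of_eventuallyEq hx.1)
  exact hneg.ne (hg'.unique ((hasDerivAt_const x₀ 0).congr_of_eventuallyEq hzero))

theorem HasDerivAt.nonpos_of_isMinOn_Icc {g : ℝ → ℝ} {g' s t : ℝ} (hg : HasDerivAt g g' t)
    (hst : s < t) (hmin : IsMinOn g (Icc s t) t) : g' ≤ 0 := by
  have hcone : s - t ∈ posTangentConeAt (Icc s t) t :=
    sub_mem_posTangentConeAt_of_segment_subset (segment_symm ℝ t s ▸ segment_eq_Icc hst.le).le
  have h := hmin.localize.hasFDerivWithinAt_nonneg hg.hasDerivWithinAt.hasFDerivWithinAt hcone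
  simp only [ContinuousLinearMap.toSpanSingleton_apply, smul_eq_mul] at h
  nlinarith

theorem LocallyLipschitz.exists_mul_le_of_nonpos {f : ℝ → ℝ} (hf : LocallyLipschitz f)
    (hf0 : f 0 = 0) (R : ℝ) : ∃ K : ℝ, ∀ s ∈ Icc (-R) 0, K * s ≤ f s := by
  obtain ⟨K, hK⟩ := hf.locallyLipschitzOn.exists_lipschitzOnWith_of_compact
    (isCompact_Icc (a := -R) (b := 0))
  refine ⟨K, fun s hs => ?_⟩
  have h := hK.dist_le_mul s hs 0 ⟨hs.1.trans hs.2, le_rfl⟩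
  rw [hf0, Real.dist_0_eq_abs, Real.dist_0_eq_abs, abs_of_nonpos hs.2] at h
  linarith [neg_abs_le (f s)]

theorem HasDerivAt.le_mul_of_isMinOn_exp_mul {w : ℝ → ℝ} {w' M s t : ℝ} (hw : HasDerivAt w w' t)
    (hst : s < t) (hmin : IsMinOn (fun τ => Real.exp (-M * τ) * w τ) (Icc s t) t) :
    w' ≤ M * w t := by
  have hexp : HasDerivAt (fun τ => Real.exp (-M * τ)) (Real.exp (-M * t) * -M) t := by
    simpa using ((hasDerivAt_id t).const_mul (-M)).exp
  have h := (hexp.mul hw).nonpos_of_isMinOn_Icc hst hmin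
  have : Real.exp (-M * t) * (w' - M * w t) ≤ 0 := by linarith
  linarith [nonpos_of_mul_nonpos_right this (exp_pos _)]

theorem nonneg_of_isParabolicSupersolution {a b T : ℝ} {f : ℝ → ℝ} (hf : LocallyLipschitz f)
    (hf0 : f 0 = 0) {c u ux uxx ut : ℝ → ℝ → ℝ}
    (hcont : ContinuousOn (fun p : ℝ × ℝ => u p.1 p.2) (Icc a b ×ˢ Icc 0 T))
    (hux : ∀ t ∈ Ioc (0:ℝ) T, ∀ x ∈ Ioo a b, HasDerivAt (fun y => u y t) (ux x t) x)
    (huxx : ∀ t ∈ Ioc (0:ℝ) T, ∀ x ∈ Ioo a b, HasDerivAt (fun y => ux y t) (uxx x t) x)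
    (hut : ∀ t ∈ Ioc (0:ℝ) T, ∀ x ∈ Ioo a b, HasDerivAt (fun s => u x s) (ut x t) t)
    (hsuper : ∀ t ∈ Ioc (0:ℝ) T, ∀ x ∈ Ioo a b,
      uxx x t + c x t * ux x t + f (u x t) ≤ ut x t)
    (hbc : ∀ t ∈ Icc (0:ℝ) T, 0 ≤ u a t ∧ 0 ≤ u b t)
    (hinit : ∀ x ∈ Icc a b, 0 ≤ u x 0) :
    ∀ t ∈ Icc (0:ℝ) T, ∀ x ∈ Icc a b, 0 ≤ u x t := by
  intro t ht x hx
  set Q := Icc a b ×ˢ Icc (0:ℝ) T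
  have hQ : IsCompact Q := isCompact_Icc.prod isCompact_Icc
  obtain ⟨C, hC⟩ := hQ.exists_bound_of_continuousOn hcont
  obtain ⟨K, hK⟩ := hf.exists_mul_le_of_nonpos hf0 C
  set M := K + 1
  have hv : ContinuousOn (fun p : ℝ × ℝ => exp (-M * p.2) * u p.1 p.2) Q :=
    (by fun_prop : Continuous fun p : ℝ × ℝ => exp (-M * p.2)).continuousOn.mul hcont
  obtain ⟨⟨x₀, t₀⟩, ⟨hx₀, ht₀⟩, hmin⟩ := hQ.exists_isMinOn ⟨(x, t), hx, ht⟩ hv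
  rw [isMinOn_iff] at hmin
  by_contra! hneg
  have hu₀ : u x₀ t₀ < 0 := by
    have := (hmin (x, t) ⟨hx, ht⟩).trans_lt (mul_neg_of_pos_of_neg (exp_pos _) hneg)
    exact neg_of_mul_neg_right this (exp_pos _).le
  have ht₀pos : 0 < t₀ := ht₀.1.lt_of_ne fun h => (hinit x₀ hx₀).not_gt (h ▸ hu₀)
  have hx₀int : x₀ ∈ Ioo a b :=
    ⟨hx₀.1.lt_of_ne fun h => (hbc t₀ ht₀).1.not_gt (h ▸ hu₀),
      hx₀.2.lt_of_ne fun h => (hbc t₀ ht₀).2.not_gt (h ▸ hu₀)⟩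
  have ht₀' : t₀ ∈ Ioc 0 T := ⟨ht₀pos, ht₀.2⟩
  have hxmin : IsLocalMin (fun y => u y t₀) x₀ := by
    filter_upwards [Ioo_mem_nhds hx₀int.1 hx₀int.2] with y hy
    exact le_of_mul_le_mul_left (hmin (y, t₀) ⟨Ioo_subset_Icc_self hy, ht₀⟩) (exp_pos _)
  have hux₀ : ux x₀ t₀ = 0 := hxmin.hasDerivAt_eq_zero (hux t₀ ht₀' x₀ hx₀int)
  have huxx₀ : 0 ≤ uxx x₀ t₀ := hxmin.nonneg_of_hasDerivAt_hasDerivAt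
    (eventually_of_mem (Ioo_mem_nhds hx₀int.1 hx₀int.2) (hux t₀ ht₀'))
    (huxx t₀ ht₀' x₀ hx₀int)
  have hut₀ : ut x₀ t₀ ≤ M * u x₀ t₀ := HasDerivAt.le_mul_of_isMinOn_exp_mul
    (hut t₀ ht₀' x₀ hx₀int) ht₀pos
    (isMinOn_iff.2 fun s hs => hmin (x₀, s) ⟨hx₀, hs.1, hs.2.trans ht₀.2⟩)
  have hfu₀ : K * u x₀ t₀ ≤ f (u x₀ t₀) :=
    hK _ ⟨neg_le_of_abs_le (hC _ ⟨hx₀, ht₀⟩), hu₀.le⟩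
  have := hsuper t₀ ht₀' x₀ hx₀int
  rw [hux₀, mul_zero, add_zero] at this
  linarith

theorem stmt_18_general (a b T : ℝ)
    (f : ℝ → ℝ) (hf : ContDiff ℝ 1 f) (hf0 : f 0 = 0) (hf1 : f 1 = 0)
    (F1 : ℝ)
    (u ux uxx ut : ℝ → ℝ → ℝ)
    (hcont : ContinuousOn (fun p : ℝ × ℝ => u p.1 p.2) (Icc a b ×ˢ Icc 0 T))
    (hux : ∀ t ∈ Ioc (0:ℝ) T, ∀ x ∈ Ioo a b,
      HasDerivAt (fun y => u y t) (ux x t) x)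
    (huxx : ∀ t ∈ Ioc (0:ℝ) T, ∀ x ∈ Ioo a b,
      HasDerivAt (fun y => ux y t) (uxx x t) x)
    (hut : ∀ t ∈ Ioc (0:ℝ) T, ∀ x ∈ Ioo a b,
      HasDerivAt (fun s => u x s) (ut x t) t)
    (heq : ∀ t ∈ Ioc (0:ℝ) T, ∀ x ∈ Ioo a b,
      ut x t = uxx x t
        + (-F1 / ∫ y in a..b, (ux y t) ^ 2) * ux x t + f (u x t))
    (hbc : ∀ t ∈ Icc (0:ℝ) T, u a t = 0 ∧ u b t = 1)
    (hinit : ∀ x ∈ Icc a b, 0 ≤ u x 0 ∧ u x 0 ≤ 1) :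
    ∀ t ∈ Icc (0:ℝ) T, ∀ x ∈ Icc a b, 0 ≤ u x t ∧ u x t ≤ 1 := by
  set c : ℝ → ℝ → ℝ := fun _ t => -F1 / ∫ y in a..b, (ux y t) ^ 2
  have hlower := nonneg_of_isParabolicSupersolution hf.locallyLipschitz hf0 (c := c) hcont hux
    huxx hut (fun t ht x hx => (heq t ht x hx).ge)
    (fun t ht => by simp [(hbc t ht).1, (hbc t ht).2]) (fun x hx => (hinit x hx).1)
  have hupper := nonneg_of_isParabolicSupersolution (f := fun s => -f (1 - s))
    (hf.comp (contDiff_const.sub contDiff_id)).neg.locallyLipschitz (by simp [hf1]) (c := c)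
    (u := fun x t => 1 - u x t) (continuousOn_const.sub hcont)
    (fun t ht x hx => (hux t ht x hx).const_sub 1) (fun t ht x hx => (huxx t ht x hx).neg)
    (fun t ht x hx => (hut t ht x hx).const_sub 1)
    (fun t ht x hx => by simp only [sub_sub_cancel, heq t ht x hx]; linarith)
    (fun t ht => by simp [(hbc t ht).1, (hbc t ht).2]) (fun x hx => by simp [(hinit x hx).2])
  exact fun t ht x hx => ⟨hlower t ht x hx, sub_nonneg.1 (hupper t ht x hx)⟩

/-- Comparison with the constants `0` and `1` for the nonlocal problem
`u_t = u_xx + λ(u_x)u_x + f(u)`, `λ(z) = -F(1)/‖z‖²`, `u(a)=0`, `u(b)=1`: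
if `0 ≤ u₀ ≤ 1` then `0 ≤ u ≤ 1` for all later times. -/
theorem stmt_18 (a b T : ℝ) (hab : a < b) (hT : 0 < T)
    (f : ℝ → ℝ) (hf : ContDiff ℝ 1 f) (hf0 : f 0 = 0) (hf1 : f 1 = 0)
    (F1 : ℝ) (hF1 : F1 = -∫ s in (0:ℝ)..1, f s)
    (u ux uxx ut : ℝ → ℝ → ℝ)
    (hcont : ContinuousOn (fun p : ℝ × ℝ => u p.1 p.2) (Icc a b ×ˢ Icc 0 T))
    (hux : ∀ t ∈ Ioc (0:ℝ) T, ∀ x ∈ Ioo a b,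
      HasDerivAt (fun y => u y t) (ux x t) x)
    (huxx : ∀ t ∈ Ioc (0:ℝ) T, ∀ x ∈ Ioo a b,
      HasDerivAt (fun y => ux y t) (uxx x t) x)
    (hut : ∀ t ∈ Ioc (0:ℝ) T, ∀ x ∈ Ioo a b,
      HasDerivAt (fun s => u x s) (ut x t) t)
    (heq : ∀ t ∈ Ioc (0:ℝ) T, ∀ x ∈ Ioo a b,
      ut x t = uxx x t
        + (-F1 / ∫ y in a..b, (ux y t) ^ 2) * ux x t + f (u x t))
    (hbc : ∀ t ∈ Icc (0:ℝ) T, u a t = 0 ∧ u b t = 1)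
    (hinit : ∀ x ∈ Icc a b, 0 ≤ u x 0 ∧ u x 0 ≤ 1) :
    ∀ t ∈ Icc (0:ℝ) T, ∀ x ∈ Icc a b, 0 ≤ u x t ∧ u x t ≤ 1 :=
  stmt_18_general a b T f hf hf0 hf1 F1 u ux uxx ut hcont hux huxx hut heq hbc hinit
end
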